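/- The upward parabola v = (u^2 - r^2)/√2 is tangent to the level curve of H_in through the point (√(V/2), (V/2 - r^2)/√2): the gradients of H_out - r^4/4 and of H_in are parallel at that point. -/
import Mathlib


/-- Tangency of the upward parabola with the inner level curve at u* = √(V/2):
the gradients ∇H_out and ∇H_in are linearly dependent there.
∇H_out(u,v) = (r²u - u³, v), ∇H_in(u,v) = ((r²-V)u + u³, v). -/
theorem tangency_at_pitchfork (r V : ℝ) (hr : 0 < r) (hV : 0 < V) :
    ¬ LinearIndependent ℝ
      ![((r ^ 2 * Real.sqrt (V / 2) - Real.sqrt (V / 2) ^ 3,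
          ((Real.sqrt (V / 2)) ^ 2 - r ^ 2) / Real.sqrt 2) : ℝ × ℝ),
        (((r ^ 2 - V) * Real.sqrt (V / 2) + Real.sqrt (V / 2) ^ 3,
          ((Real.sqrt (V / 2)) ^ 2 - r ^ 2) / Real.sqrt 2) : ℝ × ℝ)] := by
  intro h
  have hs : Real.sqrt (V / 2) ^ 2 = V / 2 := Real.sq_sqrt (by linarith)
  have heq : r ^ 2 * Real.sqrt (V / 2) - Real.sqrt (V / 2) ^ 3
      = (r ^ 2 - V) * Real.sqrt (V / 2) + Real.sqrt (V / 2) ^ 3 := by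
    have : Real.sqrt (V / 2) ^ 3 = (V / 2) * Real.sqrt (V / 2) := by
      rw [pow_succ, hs]
    rw [this]; ring
  have h01 : (0 : Fin 2) = 1 := h.injective (by simp only [Matrix.cons_val_zero, Matrix.cons_val_one, Matrix.head_cons, heq])
  simp at h01
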